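/- arXiv:2212.12885 — 3 statements merged into one kernel-verified Lean document; each statement's English description precedes it below -/
import Mathlib

section
/- Let $f:\mathbb{R}_+\to\mathbb{R}$ be continuous and strictly increasing on some interval $(K_0,\infty)$, and suppose $\lim_{x\to\infty} f(x)/(x^a(\log x)^b) = c \in (0,\infty)$ for some $a>0$, $b\ge 0$. Then $f^{-1}(y)$ is well defined for all large $y$, and $\lim_{y\to\infty} f^{-1}(y) \Big/ \left(\frac{a^b y}{c(\log y)^b}\right)^{1/a} = 1$. -/
/-!
Write `x = f⁻¹ y`. The hypothesis says `y ∼ c x^a (log x)^b`; taking logarithms,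
`log y = a log x + O(log log x)`, so `log y ∼ a log x`. Feeding this back in,
`x^a ∼ y / (c (log x)^b) ∼ a^b y / (c (log y)^b)`, and taking `a`-th roots gives the claim.
-/

open Filter Real Topology Set

lemma tendsto_rpow_mul_log_rpow_atTop {a b : ℝ} (ha : 0 < a) (hb : 0 ≤ b) :
    Tendsto (fun x : ℝ => x ^ a * log x ^ b) atTop atTop := by
  refine tendsto_atTop_mono' atTop ?_ (tendsto_rpow_atTop ha)
  filter_upwards [tendsto_log_atTop.eventually_ge_atTop 1, eventually_ge_atTop 0] with x hlog hx
  exact le_mul_of_one_le_right (rpow_nonneg hx a) (one_le_rpow hlog hb)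

lemma exists_eventually_rightInverse_of_continuousOn_Ioi {f : ℝ → ℝ} {K₀ : ℝ}
    (hcont : ContinuousOn f (Ioi K₀)) (htop : Tendsto f atTop atTop) :
    ∃ g : ℝ → ℝ, ∀ᶠ y in atTop, g y ∈ Ioi K₀ ∧ f (g y) = y := by
  have hsurj : ∀ y, f (K₀ + 1) ≤ y → ∃ x ∈ Ioi K₀, f x = y := by
    intro y hy
    obtain ⟨X, hfX, hX⟩ :=
      ((htop.eventually_ge_atTop y).and (eventually_ge_atTop (K₀ + 1))).exists
    have hsub : Icc (K₀ + 1) X ⊆ Ioi K₀ := fun x hx => (lt_add_one K₀).trans_le hx.1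
    obtain ⟨x, hx, hfx⟩ := intermediate_value_Icc hX (hcont.mono hsub) ⟨hy, hfX⟩
    exact ⟨x, hsub hx, hfx⟩
  choose! g hg using hsurj
  exact ⟨g, (eventually_ge_atTop _).mono hg⟩

lemma tendsto_atTop_of_eventually_rightInverse {f g : ℝ → ℝ} {K₀ : ℝ}
    (hmono : MonotoneOn f (Ioi K₀)) (hg : ∀ᶠ y in atTop, g y ∈ Ioi K₀ ∧ f (g y) = y) :
    Tendsto g atTop atTop := by
  refine tendsto_atTop.2 fun M => ?_
  set M' := max M (K₀ + 1)
  have hM' : M' ∈ Ioi K₀ := (lt_add_one K₀).trans_le (le_max_right _ _)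
  filter_upwards [hg, eventually_gt_atTop (f M')] with y ⟨hgy, hfgy⟩ hy
  by_contra! hlt
  have := hmono hgy hM' (hlt.le.trans (le_max_left _ _))
  linarith

section AsymptoticInverse

variable {α : Type*} {l : Filter α} {X Y : α → ℝ} {a b c : ℝ}

lemma tendsto_log_div_log_of_tendsto_div_rpow_mul_log_rpow (hc : 0 < c)
    (hX : Tendsto X l atTop)
    (hXY : Tendsto (fun t => Y t / (X t ^ a * log (X t) ^ b)) l (𝓝 c)) :
    Tendsto (fun t => log (Y t) / log (X t)) l (𝓝 a) := by
  have hlogX : Tendsto (fun t => log (X t)) l atTop := tendsto_log_atTop.comp hX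
  have hratio : Tendsto (fun t => log (Y t / (X t ^ a * log (X t) ^ b)) / log (X t)) l (𝓝 0) :=
    ((continuousAt_log hc.ne').tendsto.comp hXY).div_atTop hlogX
  have hloglog : Tendsto (fun t => log (log (X t)) / log (X t)) l (𝓝 0) :=
    isLittleO_log_id_atTop.tendsto_div_nhds_zero.comp hlogX
  have hsum := (hratio.add_const a).add (hloglog.const_mul b)
  rw [zero_add, mul_zero, add_zero] at hsum
  refine hsum.congr' ?_
  filter_upwards [hX.eventually_gt_atTop 0, hlogX.eventually_gt_atTop 0,
    hXY.eventually (eventually_gt_nhds hc)] with t hX0 hlogX0 hpos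
  have hXa := rpow_pos_of_pos hX0 a
  have hlogb := rpow_pos_of_pos hlogX0 b
  have hY0 : 0 < Y t := (div_pos_iff_of_pos_right (mul_pos hXa hlogb)).1 hpos
  rw [log_div hY0.ne' (by positivity), log_mul hXa.ne' hlogb.ne', log_rpow hX0, log_rpow hlogX0]
  field_simp
  ring

lemma tendsto_div_rpow_inv_of_tendsto_div_rpow_mul_log_rpow (ha : 0 < a) (hc : 0 < c)
    (hX : Tendsto X l atTop)
    (hXY : Tendsto (fun t => Y t / (X t ^ a * log (X t) ^ b)) l (𝓝 c)) :
    Tendsto (fun t => X t / (a ^ b * Y t / (c * log (Y t) ^ b)) ^ (1 / a)) l (𝓝 1) := by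
  have hlog := tendsto_log_div_log_of_tendsto_div_rpow_mul_log_rpow hc hX hXY
  have hlogX : Tendsto (fun t => log (X t)) l atTop := tendsto_log_atTop.comp hX
  -- `X^a / (a^b Y / (c (log Y)^b)) = (c / (Y / (X^a (log X)^b))) * (log Y / (a log X))^b`.
  have hpow : Tendsto (fun t => c / (Y t / (X t ^ a * log (X t) ^ b)) *
      (log (Y t) / log (X t) / a) ^ b) l (𝓝 1) := by
    have hfirst : Tendsto (fun t => c / (Y t / (X t ^ a * log (X t) ^ b))) l (𝓝 1) := by
      rw [← div_self hc.ne']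
      exact tendsto_const_nhds.div hXY hc.ne'
    have hsecond : Tendsto (fun t => (log (Y t) / log (X t) / a) ^ b) l (𝓝 1) := by
      have h := (hlog.div_const a).rpow_const (p := b) (by simp [div_self ha.ne'])
      simpa [div_self ha.ne'] using h
    simpa using hfirst.mul hsecond
  have hroot := hpow.rpow_const (p := 1 / a) (Or.inl one_ne_zero)
  rw [one_rpow] at hroot
  refine hroot.congr' ?_
  filter_upwards [hX.eventually_gt_atTop 0, hlogX.eventually_gt_atTop 0,
    hXY.eventually (eventually_gt_nhds hc), hlog.eventually (eventually_gt_nhds ha)]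
    with t hX0 hlogX0 hpos hlogratio
  have hXa := rpow_pos_of_pos hX0 a
  have hlogb := rpow_pos_of_pos hlogX0 b
  have hY0 : 0 < Y t := (div_pos_iff_of_pos_right (mul_pos hXa hlogb)).1 hpos
  have hlogY0 : 0 < log (Y t) := (div_pos_iff_of_pos_right hlogX0).1 hlogratio
  have hab := rpow_pos_of_pos ha b
  have hlogYb := rpow_pos_of_pos hlogY0 b
  calc _ = (X t ^ a / (a ^ b * Y t / (c * log (Y t) ^ b))) ^ (1 / a) := by
        rw [div_div, div_rpow hlogY0.le (by positivity), mul_rpow hlogX0.le ha.le]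
        congr 1
        field_simp
    _ = _ := by
        rw [div_rpow (by positivity) (by positivity), one_div, rpow_rpow_inv hX0.le ha.ne']

end AsymptoticInverse

theorem stmt_3 (f : ℝ → ℝ) (K₀ a b c : ℝ) (ha : 0 < a) (hb : 0 ≤ b) (hc : 0 < c)
    (hcont : ContinuousOn f (Set.Ioi K₀))
    (hmono : StrictMonoOn f (Set.Ioi K₀))
    (hlim : Tendsto (fun x => f x / (x ^ a * (Real.log x) ^ b)) atTop (nhds c)) :
    ∃ finv : ℝ → ℝ,
      (∀ᶠ y in atTop, finv y ∈ Set.Ioi K₀ ∧ f (finv y) = y) ∧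
      Tendsto (fun y => finv y / (a ^ b * y / (c * (Real.log y) ^ b)) ^ (1 / a))
        atTop (nhds 1) := by
  have hf_top : Tendsto f atTop atTop := by
    refine (hlim.pos_mul_atTop hc (tendsto_rpow_mul_log_rpow_atTop ha hb)).congr' ?_
    filter_upwards [(tendsto_rpow_mul_log_rpow_atTop ha hb).eventually_gt_atTop 0] with x hx
    exact div_mul_cancel₀ _ hx.ne'
  obtain ⟨finv, hfinv⟩ := exists_eventually_rightInverse_of_continuousOn_Ioi hcont hf_top
  have hfinv_top := tendsto_atTop_of_eventually_rightInverse hmono.monotoneOn hfinv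
  have hratio : Tendsto (fun y => y / (finv y ^ a * log (finv y) ^ b)) atTop (𝓝 c) := by
    refine (hlim.comp hfinv_top).congr' ?_
    filter_upwards [hfinv] with y hy
    simp only [Function.comp_apply, hy.2]
  exact ⟨finv, hfinv,
    tendsto_div_rpow_inv_of_tendsto_div_rpow_mul_log_rpow (Y := id) ha hc hfinv_top hratio⟩
end

section
/- For fixed $x>0$ and $a\in\mathbb{R}$, let $\Gamma(t,x)=\int_x^\infty e^{-r} r^{t-1} dr$ denote the upper incomplete gamma function and $\Gamma(t)=\Gamma(t,0)$. Then $\lim_{t\to\infty} \left(\frac{\Gamma(t+a,x)}{\Gamma(t)} - t^a\right) \cdot t^{-a} = 0$, i.e. $\Gamma(t+a,x)/\Gamma(t) = t^a(1+o(1))$ as $t\to\infty$. -/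
open MeasureTheory Filter Real

/-- The upper incomplete gamma function `Γ(t,x) = ∫_x^∞ e^{-r} r^{t-1} dr`. -/
noncomputable def upperIncGamma (t x : ℝ) : ℝ :=
  ∫ r in Set.Ioi x, Real.exp (-r) * r ^ (t - 1)

/-!
Write `Γ(t+a,x) = Γ(t+a) - γ(t+a,x)`. The lower incomplete gamma function satisfies
`γ(s,x) ≤ x^s`, while `Γ(s) ≥ e^{-4x} (2x)^s`, so `γ(s,x)/Γ(s) = O(2^{-s})` is negligible.
It remains to see `Γ(t+a)/(Γ(t) t^a) → 1` (Wendel). For `0 < b < 1`, log-convexity of `Γ`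
squeezes `Γ(t+b)/(Γ(t) t^b)` between `(t/(t+b))^{1-b}` and `1`, and the functional equation
`Γ(s+1) = s Γ(s)` moves the limit between `a` and `a + 1`.
-/

open Set Topology

noncomputable def lowerIncGamma (s x : ℝ) : ℝ :=
  ∫ r in Ioc 0 x, Real.exp (-r) * r ^ (s - 1)

lemma upperIncGamma_eq_Gamma_sub_lowerIncGamma {s x : ℝ} (hs : 0 < s) (hx : 0 ≤ x) :
    upperIncGamma s x = Gamma s - lowerIncGamma s x := by
  have hi := GammaIntegral_convergent hs
  have hu : Ioc (0 : ℝ) x ∪ Ioi x = Ioi 0 := Ioc_union_Ioi_eq_Ioi hx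
  have hsplit := setIntegral_union (Ioc_disjoint_Ioi le_rfl) measurableSet_Ioi
    (hi.mono_set (hu ▸ subset_union_left)) (hi.mono_set (hu ▸ subset_union_right))
  rw [hu] at hsplit
  rw [upperIncGamma, lowerIncGamma, Gamma_eq_integral hs, hsplit]
  ring

lemma lowerIncGamma_nonneg (s x : ℝ) : 0 ≤ lowerIncGamma s x :=
  setIntegral_nonneg measurableSet_Ioc fun r hr => by
    have : 0 < r := hr.1
    positivity

lemma lowerIncGamma_le_rpow {s x : ℝ} (hs : 1 ≤ s) (hx : 0 ≤ x) : lowerIncGamma s x ≤ x ^ s := by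
  have hi : IntegrableOn (fun r : ℝ => Real.exp (-r) * r ^ (s - 1)) (Ioc 0 x) :=
    (GammaIntegral_convergent (by linarith)).mono_set Ioc_subset_Ioi_self
  calc lowerIncGamma s x ≤ ∫ _ in Ioc 0 x, x ^ (s - 1) := by
        refine setIntegral_mono_on hi (integrableOn_const (by simp)) measurableSet_Ioc
          fun r hr => ?_
        calc Real.exp (-r) * r ^ (s - 1) ≤ 1 * x ^ (s - 1) :=
              mul_le_mul (exp_le_one_iff.mpr (by linarith [hr.1]))
                (rpow_le_rpow hr.1.le hr.2 (by linarith)) (rpow_nonneg hr.1.le _) zero_le_one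
          _ = x ^ (s - 1) := one_mul _
    _ = x ^ s := by
        rw [setIntegral_const, volume_real_Ioc_of_le hx, smul_eq_mul, sub_zero,
          ← rpow_one_add' hx (by linarith)]
        ring_nf

lemma exp_neg_mul_rpow_le_Gamma {K s : ℝ} (hK : 0 < K) (hs : 1 ≤ s) :
    Real.exp (-(2 * K)) * K ^ s ≤ Gamma s := by
  have hi := GammaIntegral_convergent (by linarith : 0 < s)
  have hsub : Ioc K (2 * K) ⊆ Ioi 0 := fun r hr => hK.trans hr.1
  calc Real.exp (-(2 * K)) * K ^ s = ∫ _ in Ioc K (2 * K), Real.exp (-(2 * K)) * K ^ (s - 1) := by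
        rw [setIntegral_const, volume_real_Ioc_of_le (by linarith), smul_eq_mul,
          rpow_sub_one hK.ne']
        field_simp
        norm_num
    _ ≤ ∫ r in Ioc K (2 * K), Real.exp (-r) * r ^ (s - 1) := by
        refine setIntegral_mono_on (integrableOn_const (by simp)) (hi.mono_set hsub)
          measurableSet_Ioc fun r hr => ?_
        gcongr
        · linarith [hr.2]
        · exact hr.1.le
    _ ≤ ∫ r in Ioi 0, Real.exp (-r) * r ^ (s - 1) := by
        refine setIntegral_mono_set hi ?_ hsub.eventuallyLE
        filter_upwards [ae_restrict_mem measurableSet_Ioi] with r (hr : 0 < r)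
        positivity
    _ = Gamma s := (Gamma_eq_integral (by linarith)).symm

lemma tendsto_lowerIncGamma_div_Gamma {x : ℝ} (hx : 0 < x) :
    Tendsto (fun s => lowerIncGamma s x / Gamma s) atTop (𝓝 0) := by
  have hbound : Tendsto (fun s : ℝ => Real.exp (4 * x) * 2⁻¹ ^ s) atTop (𝓝 0) := by
    simpa using (tendsto_rpow_atTop_of_base_lt_one 2⁻¹ (by norm_num) (by norm_num)).const_mul
      (Real.exp (4 * x))
  refine squeeze_zero' ?_ ?_ hbound
  · filter_upwards [eventually_gt_atTop 0] with s hs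
    exact div_nonneg (lowerIncGamma_nonneg s x) (Gamma_pos_of_pos hs).le
  · filter_upwards [eventually_ge_atTop 1] with s hs
    have hΓ := exp_neg_mul_rpow_le_Gamma (by linarith : 0 < 2 * x) hs
    calc lowerIncGamma s x / Gamma s ≤ x ^ s / (Real.exp (-(2 * (2 * x))) * (2 * x) ^ s) :=
          div_le_div₀ (by positivity) (lowerIncGamma_le_rpow hs hx.le) (by positivity) hΓ
      _ = Real.exp (4 * x) * 2⁻¹ ^ s := by
          rw [mul_rpow zero_le_two hx.le, inv_rpow zero_le_two, exp_neg]
          have : (0 : ℝ) < x ^ s := by positivity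
          field_simp
          ring_nf

noncomputable def gammaRatio (a t : ℝ) : ℝ := Gamma (t + a) / (Gamma t * t ^ a)

lemma Gamma_add_le_Gamma_mul_rpow {t b : ℝ} (ht : 0 < t) (hb0 : 0 < b) (hb1 : b < 1) :
    Gamma (t + b) ≤ Gamma t * t ^ b := by
  have hG := Gamma_pos_of_pos ht
  have h := Gamma_mul_add_mul_le_rpow_Gamma_mul_rpow_Gamma (s := t) (t := t + 1)
    (a := 1 - b) (b := b) ht (by linarith) (by linarith) hb0 (by ring)
  rw [show (1 - b) * t + b * (t + 1) = t + b by ring, Gamma_add_one ht.ne'] at h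
  calc Gamma (t + b) ≤ Gamma t ^ (1 - b) * (t * Gamma t) ^ b := h
    _ = Gamma t ^ ((1 - b) + b) * t ^ b := by
        rw [mul_rpow ht.le hG.le, rpow_add hG]; ring
    _ = Gamma t * t ^ b := by norm_num

lemma mul_Gamma_le_Gamma_add_mul_rpow {t b : ℝ} (ht : 0 < t) (hb0 : 0 < b) (hb1 : b < 1) :
    t * Gamma t ≤ Gamma (t + b) * (t + b) ^ (1 - b) := by
  have hG := Gamma_pos_of_pos (by linarith : 0 < t + b)
  have h := Gamma_mul_add_mul_le_rpow_Gamma_mul_rpow_Gamma (s := t + b) (t := t + b + 1)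
    (a := b) (b := 1 - b) (by linarith) (by linarith) hb0 (by linarith) (by ring)
  rw [show b * (t + b) + (1 - b) * (t + b + 1) = t + 1 by ring, Gamma_add_one ht.ne',
    Gamma_add_one (by linarith)] at h
  calc t * Gamma t ≤ Gamma (t + b) ^ b * ((t + b) * Gamma (t + b)) ^ (1 - b) := h
    _ = Gamma (t + b) ^ (b + (1 - b)) * (t + b) ^ (1 - b) := by
        rw [mul_rpow (by linarith) hG.le, rpow_add hG]; ring
    _ = Gamma (t + b) * (t + b) ^ (1 - b) := by norm_num

lemma tendsto_add_div_self (c : ℝ) : Tendsto (fun t : ℝ => (t + c) / t) atTop (𝓝 1) := by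
  have h : Tendsto (fun t : ℝ => 1 + c / t) atTop (𝓝 (1 + 0)) :=
    tendsto_const_nhds.add (tendsto_const_nhds.div_atTop tendsto_id)
  rw [add_zero] at h
  refine h.congr' ?_
  filter_upwards [eventually_gt_atTop 0] with t ht
  field_simp

lemma tendsto_gammaRatio_of_mem_Ico {b : ℝ} (hb0 : 0 ≤ b) (hb1 : b < 1) :
    Tendsto (gammaRatio b) atTop (𝓝 1) := by
  rcases hb0.eq_or_lt with rfl | hb0
  · refine tendsto_const_nhds.congr' ?_
    filter_upwards [eventually_gt_atTop 0] with t ht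
    simp [gammaRatio, (Gamma_pos_of_pos ht).ne']
  have hlow : Tendsto (fun t : ℝ => (t / (t + b)) ^ (1 - b)) atTop (𝓝 1) := by
    simpa using ((tendsto_add_div_self b).inv₀ one_ne_zero).rpow_const (p := 1 - b)
      (Or.inr (by linarith))
  refine tendsto_of_tendsto_of_tendsto_of_le_of_le' hlow tendsto_const_nhds ?_ ?_
  · filter_upwards [eventually_gt_atTop 0] with t ht
    have htb : 0 < t + b := by linarith
    have hpos : 0 < Gamma t * t ^ b := mul_pos (Gamma_pos_of_pos ht) (by positivity)
    rw [gammaRatio, le_div_iff₀ hpos, div_rpow ht.le htb.le, div_mul_eq_mul_div,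
      div_le_iff₀ (by positivity)]
    have hpow : t ^ (1 - b) * t ^ b = t := by rw [← rpow_add ht]; simp
    calc t ^ (1 - b) * (Gamma t * t ^ b) = (t ^ (1 - b) * t ^ b) * Gamma t := by ring
      _ = t * Gamma t := by rw [hpow]
      _ ≤ Gamma (t + b) * (t + b) ^ (1 - b) := mul_Gamma_le_Gamma_add_mul_rpow ht hb0 hb1
  · filter_upwards [eventually_gt_atTop 0] with t ht
    rw [gammaRatio, div_le_one (mul_pos (Gamma_pos_of_pos ht) (by positivity))]
    exact Gamma_add_le_Gamma_mul_rpow ht hb0 hb1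

lemma gammaRatio_add_one_eventuallyEq (a : ℝ) :
    gammaRatio (a + 1) =ᶠ[atTop] fun t => gammaRatio a t * ((t + a) / t) := by
  filter_upwards [eventually_gt_atTop 0, eventually_gt_atTop (-a)] with t ht hta
  have hG := (Gamma_pos_of_pos ht).ne'
  have hpow : t ^ a ≠ 0 := (rpow_pos_of_pos ht a).ne'
  rw [gammaRatio, gammaRatio, ← add_assoc, Gamma_add_one (by linarith), rpow_add_one ht.ne']
  field_simp

lemma tendsto_gammaRatio_add_one_iff (a : ℝ) :
    Tendsto (gammaRatio (a + 1)) atTop (𝓝 1) ↔ Tendsto (gammaRatio a) atTop (𝓝 1) := by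
  rw [tendsto_congr' (gammaRatio_add_one_eventuallyEq a)]
  constructor
  · intro h
    simpa using (h.div (tendsto_add_div_self a) one_ne_zero).congr' <| by
      filter_upwards [eventually_gt_atTop 0, eventually_gt_atTop (-a)] with t ht hta
      exact mul_div_cancel_right₀ _ (div_pos (by linarith) ht).ne'
  · intro h
    simpa using h.mul (tendsto_add_div_self a)

lemma tendsto_gammaRatio (a : ℝ) : Tendsto (gammaRatio a) atTop (𝓝 1) := by
  suffices ∀ n : ℤ, Tendsto (gammaRatio (Int.fract a + n)) atTop (𝓝 1) by
    simpa only [Int.fract_add_floor] using this ⌊a⌋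
  intro n
  induction n using Int.induction_on with
  | zero => simpa using tendsto_gammaRatio_of_mem_Ico (Int.fract_nonneg a) (Int.fract_lt_one a)
  | succ k ih => push_cast; rwa [← add_assoc, tendsto_gammaRatio_add_one_iff]
  | pred k ih =>
    rw [← tendsto_gammaRatio_add_one_iff]
    push_cast at ih ⊢
    convert ih using 2
    ring

theorem stmt_6 (x a : ℝ) (hx : 0 < x) :
    Tendsto (fun t : ℝ => upperIncGamma (t + a) x / (Real.Gamma t * t ^ a))
      atTop (nhds 1) := by
  have hlower : Tendsto (fun t => lowerIncGamma (t + a) x / Gamma (t + a)) atTop (𝓝 0) :=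
    (tendsto_lowerIncGamma_div_Gamma hx).comp (tendsto_atTop_add_const_right _ a tendsto_id)
  have hlim := ((tendsto_const_nhds (x := (1 : ℝ))).sub hlower).mul (tendsto_gammaRatio a)
  rw [sub_zero, one_mul] at hlim
  refine hlim.congr' ?_
  filter_upwards [eventually_gt_atTop (-a)] with t hta
  have hΓ := (Gamma_pos_of_pos (by linarith : 0 < t + a)).ne'
  rw [upperIncGamma_eq_Gamma_sub_lowerIncGamma (by linarith) hx.le, gammaRatio]
  field_simp
end

section
/- Let $d\ge 1$, $\alpha\in(1,\infty)$, let $g$ be a nonnegative symmetric function, and set $\kappa(r,s,t)=\mathbf{1}\{r<g(s,t)^{1/d}\} + (g(s,t)/r^d)^\alpha\mathbf{1}\{r\ge g(s,t)^{1/d}\}$. Define $\mathcal{S}_w(w_1,w_2) = \iint_{(\mathbb{R}^d)^2} \kappa(\|\mathbf{x}\|,w,w_1)\kappa(\|\mathbf{y}\|,w,w_2)\kappa(\|\mathbf{x}-\mathbf{y}\|,w_1,w_2)\, d\mathbf{x}\,d\mathbf{y}$. Then $\mathcal{S}_w(w_1,w_2) \le \left(\frac{\alpha\omega_d}{\alpha-1}\right)^2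 \big[g(w,w_1)\wedge g(w,w_2)\big]\, g(w_1,w_2)$. -/
open MeasureTheory Real

/-- The connection function `κ_α` with weight function `g`. -/
noncomputable def kappa (d : ℕ) (α : ℝ) (g : ℝ → ℝ → ℝ) (r s t : ℝ) : ℝ :=
  if r < (g s t) ^ ((1 : ℝ) / d) then 1 else (g s t / r ^ (d : ℝ)) ^ α

/-- The triangle integral `S_w(w₁,w₂)`. -/
noncomputable def triangleInt (d : ℕ) (α : ℝ) (g : ℝ → ℝ → ℝ) (w w₁ w₂ : ℝ) : ℝ :=
  ∫ x : EuclideanSpace ℝ (Fin d), ∫ y : EuclideanSpace ℝ (Fin d),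
    kappa d α g ‖x‖ w w₁ * kappa d α g ‖y‖ w w₂ * kappa d α g ‖x - y‖ w₁ w₂

/-! Bounding `κ(‖y‖, w, w₂)` (resp. `κ(‖x‖, w, w₁)`) by `1` and integrating out the other
variable by translation invariance splits `S_w(w₁, w₂)` into `∫ κ(‖·‖, w, w₁) · ∫ κ(‖·‖, w₁, w₂)`
(resp. with `w₂`). In polar coordinates, `∫ κ(‖x‖, s, t) dx = α ω_d g(s, t) / (α - 1)`: the ball of
radius `g(s, t)^{1/d}` contributes `ω_d g(s, t)` and the power-law tail `ω_d g(s, t) / (α - 1)`. -/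

open Set
open scoped ENNReal

section TriangleBound

variable {G : Type*} [AddCommGroup G] [MeasurableSpace G] [MeasurableAdd G] {μ : Measure G}
  [μ.IsAddLeftInvariant]

theorem lintegral_lintegral_mul_mul_sub_le_left [MeasurableNeg G] [μ.IsNegInvariant]
    {f h k : G → ℝ≥0∞} (hf : Measurable f) (hk : Measurable k) (hh : h ≤ 1) :
    ∫⁻ x, ∫⁻ y, f x * h y * k (x - y) ∂μ ∂μ ≤ (∫⁻ x, f x ∂μ) * ∫⁻ z, k z ∂μ := calc
  _ ≤ ∫⁻ x, f x * ∫⁻ y, k (x - y) ∂μ ∂μ := by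
    gcongr with x
    calc ∫⁻ y, f x * h y * k (x - y) ∂μ ≤ ∫⁻ y, f x * k (x - y) ∂μ := by
          gcongr with y
          exact mul_le_of_le_one_right' (hh y)
      _ = _ := lintegral_const_mul _ (hk.comp (measurable_const_sub x))
  _ = (∫⁻ x, f x ∂μ) * ∫⁻ z, k z ∂μ := by
    simp_rw [lintegral_sub_left_eq_self k]
    exact lintegral_mul_const _ hf

theorem lintegral_lintegral_mul_mul_sub_le_right [MeasurableSub₂ G] [SFinite μ]
    {f h k : G → ℝ≥0∞} (hh : Measurable h) (hk : Measurable k) (hf : f ≤ 1) :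
    ∫⁻ x, ∫⁻ y, f x * h y * k (x - y) ∂μ ∂μ ≤ (∫⁻ y, h y ∂μ) * ∫⁻ z, k z ∂μ := calc
  _ ≤ ∫⁻ x, ∫⁻ y, h y * k (x - y) ∂μ ∂μ := by
    gcongr with x y
    exact mul_le_of_le_one_left' (hf x)
  _ = ∫⁻ y, h y * ∫⁻ x, k (x - y) ∂μ ∂μ := by
    rw [lintegral_lintegral_swap
      ((hh.comp measurable_snd).mul (hk.comp measurable_sub)).aemeasurable]
    exact lintegral_congr fun y => lintegral_const_mul _ (hk.comp (measurable_sub_const y))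
  _ = (∫⁻ y, h y ∂μ) * ∫⁻ z, k z ∂μ := by
    simp_rw [lintegral_sub_right_eq_self k]
    exact lintegral_mul_const _ hh

variable [MeasurableNeg G] [MeasurableSub₂ G] [SFinite μ] [μ.IsNegInvariant]

theorem lintegral_lintegral_mul_mul_sub_le_min {f h k : G → ℝ≥0∞} (hf : Measurable f)
    (hh : Measurable h) (hk : Measurable k) (hf1 : f ≤ 1) (hh1 : h ≤ 1) :
    ∫⁻ x, ∫⁻ y, f x * h y * k (x - y) ∂μ ∂μ ≤
      min (∫⁻ x, f x ∂μ) (∫⁻ y, h y ∂μ) * ∫⁻ z, k z ∂μ := by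
  rw [(mul_left_mono : Monotone (· * ∫⁻ z, k z ∂μ)).map_min]
  exact le_min (lintegral_lintegral_mul_mul_sub_le_left hf hk hh1)
    (lintegral_lintegral_mul_mul_sub_le_right hh hk hf1)

theorem integral_integral_mul_mul_sub_le_min {f h k : G → ℝ} (hf : Measurable f)
    (hh : Measurable h) (hk : Measurable k) (hf0 : 0 ≤ f) (hh0 : 0 ≤ h) (hk0 : 0 ≤ k)
    (hf1 : f ≤ 1) (hh1 : h ≤ 1) (hfi : Integrable f μ) (hhi : Integrable h μ)
    (hki : Integrable k μ) :
    ∫ x, ∫ y, f x * h y * k (x - y) ∂μ ∂μ ≤ min (∫ x, f x ∂μ) (∫ y, h y ∂μ) * ∫ z, k z ∂μ := by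
  have hint : ∀ {u : G → ℝ}, Integrable u μ → 0 ≤ u →
      ∫⁻ x, ENNReal.ofReal (u x) ∂μ = ENNReal.ofReal (∫ x, u x ∂μ) := fun hu hu0 =>
    (ofReal_integral_eq_lintegral_ofReal hu (.of_forall hu0)).symm
  have hmin : 0 ≤ min (∫ x, f x ∂μ) (∫ y, h y ∂μ) :=
    le_min (integral_nonneg hf0) (integral_nonneg hh0)
  have hprod : ∀ x y, ‖f x * h y * k (x - y)‖ₑ =
      ENNReal.ofReal (f x) * ENNReal.ofReal (h y) * ENNReal.ofReal (k (x - y)) := fun x y => by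
    rw [Real.enorm_of_nonneg (mul_nonneg (mul_nonneg (hf0 x) (hh0 y)) (hk0 (x - y))),
      ENNReal.ofReal_mul (mul_nonneg (hf0 x) (hh0 y)), ENNReal.ofReal_mul (hf0 x)]
  refine (ENNReal.ofReal_le_ofReal_iff (mul_nonneg hmin (integral_nonneg hk0))).1 ?_
  calc _ ≤ ∫⁻ x, ∫⁻ y, ‖f x * h y * k (x - y)‖ₑ ∂μ ∂μ :=
        (Real.ofReal_le_enorm _).trans <| (enorm_integral_le_lintegral_enorm _).trans <|
          lintegral_mono fun x => enorm_integral_le_lintegral_enorm _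
    _ ≤ min (∫⁻ x, ENNReal.ofReal (f x) ∂μ) (∫⁻ y, ENNReal.ofReal (h y) ∂μ) *
          ∫⁻ z, ENNReal.ofReal (k z) ∂μ := by
        simp_rw [hprod]
        exact lintegral_lintegral_mul_mul_sub_le_min hf.ennreal_ofReal hh.ennreal_ofReal
          hk.ennreal_ofReal (fun x => ENNReal.ofReal_le_one.2 (hf1 x))
          (fun y => ENNReal.ofReal_le_one.2 (hh1 y))
    _ = _ := by
        rw [hint hfi hf0, hint hhi hh0, hint hki hk0, ← ENNReal.ofReal_min,
          ← ENNReal.ofReal_mul hmin]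

end TriangleBound

section Kappa

variable {d : ℕ} {α : ℝ} {g : ℝ → ℝ → ℝ} {s t r : ℝ}

theorem measurable_kappa : Measurable fun r => kappa d α g r s t :=
  Measurable.ite (measurableSet_lt measurable_id measurable_const) measurable_const
    ((measurable_const.div (measurable_id.pow_const _)).pow_const _)

theorem kappa_of_lt (h : r < g s t ^ ((1 : ℝ) / d)) : kappa d α g r s t = 1 := if_pos h

theorem kappa_of_le (h : g s t ^ ((1 : ℝ) / d) ≤ r) :
    kappa d α g r s t = (g s t / r ^ (d : ℝ)) ^ α := if_neg h.not_gt

theorem kappa_nonneg (hg : 0 ≤ g s t) : 0 ≤ kappa d α g r s t := by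
  rcases lt_or_ge r (g s t ^ ((1 : ℝ) / d)) with h | h
  · simp [kappa_of_lt h]
  · have hr : 0 ≤ r := (rpow_nonneg hg _).trans h
    rw [kappa_of_le h]
    positivity

theorem kappa_le_one (hd : d ≠ 0) (hα : 0 ≤ α) (hg : 0 ≤ g s t) : kappa d α g r s t ≤ 1 := by
  rcases lt_or_ge r (g s t ^ ((1 : ℝ) / d)) with h | h
  · exact (kappa_of_lt h).le
  · have hr : 0 ≤ r := (rpow_nonneg hg _).trans h
    rw [kappa_of_le h]
    refine rpow_le_one (by positivity) (div_le_one_of_le₀ ?_ (by positivity)) hα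
    calc g s t = (g s t ^ ((1 : ℝ) / d)) ^ (d : ℝ) := by
          rw [one_div, rpow_inv_rpow hg (Nat.cast_ne_zero.2 hd)]
      _ ≤ r ^ (d : ℝ) := by gcongr

theorem radial_kappa_eqOn_zero (hd : d ≠ 0) (hα : α ≠ 0) (hg : g s t = 0) :
    EqOn (fun y : ℝ => y ^ (d - 1) • kappa d α g y s t) 0 (Ioi 0) := fun y hy => by
  have h : g s t ^ ((1 : ℝ) / d) ≤ y := by
    rw [hg, zero_rpow (by positivity)]
    exact le_of_lt hy
  simp [kappa_of_le h, hg, zero_rpow hα]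

theorem radial_kappa_eqOn_Ioo :
    EqOn (fun y : ℝ => y ^ (d - 1) • kappa d α g y s t) (fun y => y ^ (d - 1))
      (Ioo 0 (g s t ^ ((1 : ℝ) / d))) := fun y hy => by
  simp [kappa_of_lt hy.2]

theorem radial_kappa_eqOn_Ici (hd : d ≠ 0) (hg : 0 < g s t) :
    EqOn (fun y : ℝ => y ^ (d - 1) • kappa d α g y s t)
      (fun y => g s t ^ α * y ^ ((d : ℝ) - 1 - d * α)) (Ici (g s t ^ ((1 : ℝ) / d))) := by
  intro y hy
  have hy0 : 0 < y := (rpow_pos_of_pos hg _).trans_le hy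
  simp only [smul_eq_mul, kappa_of_le (mem_Ici.1 hy)]
  rw [div_rpow hg.le (by positivity), ← rpow_mul hy0.le, ← Real.rpow_natCast,
    Nat.cast_sub (Nat.one_le_iff_ne_zero.2 hd), Nat.cast_one, rpow_sub hy0 ((d : ℝ) - 1)]
  ring

theorem sub_one_sub_mul_lt_neg_one (hd : d ≠ 0) (hα : 1 < α) : (d : ℝ) - 1 - d * α < -1 := by
  have : (d : ℝ) < d * α := lt_mul_of_one_lt_right (by positivity) hα
  linarith

theorem integrableOn_Ioo_radial_kappa :
    IntegrableOn (fun y : ℝ => y ^ (d - 1) • kappa d α g y s t)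
      (Ioo 0 (g s t ^ ((1 : ℝ) / d))) :=
  ((continuous_pow _).integrableOn_Icc.mono_set Ioo_subset_Icc_self).congr_fun
    radial_kappa_eqOn_Ioo.symm measurableSet_Ioo

theorem integrableOn_Ici_radial_kappa (hd : d ≠ 0) (hα : 1 < α) (hg : 0 < g s t) :
    IntegrableOn (fun y : ℝ => y ^ (d - 1) • kappa d α g y s t)
      (Ici (g s t ^ ((1 : ℝ) / d))) := by
  refine IntegrableOn.congr_fun ?_ (radial_kappa_eqOn_Ici hd hg).symm measurableSet_Ici
  rw [integrableOn_Ici_iff_integrableOn_Ioi]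
  exact (integrableOn_Ioi_rpow_of_lt (sub_one_sub_mul_lt_neg_one hd hα)
    (rpow_pos_of_pos hg _)).const_mul _

theorem integral_Ioo_radial_kappa (hd : d ≠ 0) (hg : 0 ≤ g s t) :
    ∫ y in Ioo 0 (g s t ^ ((1 : ℝ) / d)), y ^ (d - 1) • kappa d α g y s t = g s t / d := by
  rw [setIntegral_congr_fun measurableSet_Ioo radial_kappa_eqOn_Ioo,
    ← integral_Ioc_eq_integral_Ioo, ← intervalIntegral.integral_of_le (rpow_nonneg hg _),
    integral_pow, ← Nat.cast_add_one, Nat.sub_add_cancel (Nat.one_le_iff_ne_zero.2 hd),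
    one_div, rpow_inv_natCast_pow hg hd, zero_pow hd, sub_zero]

theorem integral_Ici_radial_kappa (hd : d ≠ 0) (hα : 1 < α) (hg : 0 < g s t) :
    ∫ y in Ici (g s t ^ ((1 : ℝ) / d)), y ^ (d - 1) • kappa d α g y s t =
      g s t / (d * (α - 1)) := by
  have hexp : (1 : ℝ) / d * ((d : ℝ) - 1 - d * α + 1) = 1 - α := by
    field_simp
    ring
  rw [setIntegral_congr_fun measurableSet_Ici (radial_kappa_eqOn_Ici hd hg),
    integral_Ici_eq_integral_Ioi, integral_const_mul,
    integral_Ioi_rpow_of_lt (sub_one_sub_mul_lt_neg_one hd hα) (rpow_pos_of_pos hg _),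
    ← rpow_mul hg.le, hexp, rpow_sub hg, Real.rpow_one]
  have : g s t ^ α ≠ 0 := by positivity
  have : (α - 1) ≠ 0 := by linarith
  have : (d : ℝ) - 1 - d * α + 1 ≠ 0 := by linarith [sub_one_sub_mul_lt_neg_one hd hα]
  field_simp
  ring

theorem integrableOn_radial_kappa (hd : d ≠ 0) (hα : 1 < α) (hg : 0 ≤ g s t) :
    IntegrableOn (fun y : ℝ => y ^ (d - 1) • kappa d α g y s t) (Ioi 0) := by
  rcases hg.eq_or_lt with hg0 | hg0
  · exact integrableOn_zero.congr_fun
      (radial_kappa_eqOn_zero hd (by linarith) hg0.symm).symm measurableSet_Ioi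
  · rw [← Ioo_union_Ici_eq_Ioi (rpow_pos_of_pos hg0 _)]
    exact integrableOn_Ioo_radial_kappa.union (integrableOn_Ici_radial_kappa hd hα hg0)

theorem integral_radial_kappa (hd : d ≠ 0) (hα : 1 < α) (hg : 0 ≤ g s t) :
    ∫ y in Ioi 0, y ^ (d - 1) • kappa d α g y s t = α * g s t / ((α - 1) * d) := by
  rcases hg.eq_or_lt with hg0 | hg0
  · rw [setIntegral_congr_fun measurableSet_Ioi
      (radial_kappa_eqOn_zero hd (by linarith) hg0.symm), ← hg0]
    simp
  · rw [← Ioo_union_Ici_eq_Ioi (rpow_pos_of_pos hg0 _),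
      setIntegral_union (disjoint_left.2 fun _ hy hy' => hy.2.not_ge hy') measurableSet_Ici
        integrableOn_Ioo_radial_kappa (integrableOn_Ici_radial_kappa hd hα hg0),
      integral_Ioo_radial_kappa hd hg, integral_Ici_radial_kappa hd hα hg0]
    have : (α - 1) ≠ 0 := by linarith
    have : (d : ℝ) ≠ 0 := by positivity
    field_simp
    ring

theorem integrable_kappa_norm (hd : d ≠ 0) (hα : 1 < α) (hg : 0 ≤ g s t) :
    Integrable fun x : EuclideanSpace ℝ (Fin d) => kappa d α g ‖x‖ s t := by
  have : NeZero d := ⟨hd⟩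
  rw [integrable_fun_norm_addHaar volume (f := fun r => kappa d α g r s t),
    finrank_euclideanSpace_fin]
  exact integrableOn_radial_kappa hd hα hg

theorem integral_kappa_norm (hd : d ≠ 0) (hα : 1 < α) (hg : 0 ≤ g s t) :
    ∫ x : EuclideanSpace ℝ (Fin d), kappa d α g ‖x‖ s t =
      α * (volume (Metric.ball (0 : EuclideanSpace ℝ (Fin d)) 1)).toReal / (α - 1) * g s t := by
  have : NeZero d := ⟨hd⟩
  rw [integral_fun_norm_addHaar volume fun r => kappa d α g r s t, finrank_euclideanSpace_fin,
    integral_radial_kappa hd hα hg, nsmul_eq_mul, smul_eq_mul, measureReal_def]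
  have : (α - 1) ≠ 0 := by linarith
  have : (d : ℝ) ≠ 0 := by positivity
  field_simp

end Kappa

theorem stmt_9_general (d : ℕ) (hd : 1 ≤ d) (α : ℝ) (hα : 1 < α)
    (g : ℝ → ℝ → ℝ) (hgnn : ∀ s t, 0 ≤ g s t)
    (w w₁ w₂ : ℝ) :
    triangleInt d α g w w₁ w₂ ≤
      (α * (volume (Metric.ball (0 : EuclideanSpace ℝ (Fin d)) 1)).toReal / (α - 1)) ^ 2
        * min (g w w₁) (g w w₂) * g w₁ w₂ := by
  have hd0 : d ≠ 0 := Nat.one_le_iff_ne_zero.1 hd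
  have hα0 : 0 ≤ α := by linarith
  have hC : 0 ≤ α * (volume (Metric.ball (0 : EuclideanSpace ℝ (Fin d)) 1)).toReal / (α - 1) :=
    div_nonneg (by positivity) (by linarith)
  calc triangleInt d α g w w₁ w₂
      ≤ min (∫ x : EuclideanSpace ℝ (Fin d), kappa d α g ‖x‖ w w₁)
          (∫ y : EuclideanSpace ℝ (Fin d), kappa d α g ‖y‖ w w₂) *
          ∫ z : EuclideanSpace ℝ (Fin d), kappa d α g ‖z‖ w₁ w₂ :=
        integral_integral_mul_mul_sub_le_min (measurable_kappa.comp measurable_norm)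
          (measurable_kappa.comp measurable_norm) (measurable_kappa.comp measurable_norm)
          (fun _ => kappa_nonneg (hgnn _ _)) (fun _ => kappa_nonneg (hgnn _ _))
          (fun _ => kappa_nonneg (hgnn _ _)) (fun _ => kappa_le_one hd0 hα0 (hgnn _ _))
          (fun _ => kappa_le_one hd0 hα0 (hgnn _ _)) (integrable_kappa_norm hd0 hα (hgnn _ _))
          (integrable_kappa_norm hd0 hα (hgnn _ _)) (integrable_kappa_norm hd0 hα (hgnn _ _))
    _ = _ := by
      rw [integral_kappa_norm hd0 hα (hgnn _ _), integral_kappa_norm hd0 hα (hgnn _ _),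
        integral_kappa_norm hd0 hα (hgnn _ _), ← mul_min_of_nonneg _ _ hC]
      ring

theorem stmt_9 (d : ℕ) (hd : 1 ≤ d) (α : ℝ) (hα : 1 < α)
    (g : ℝ → ℝ → ℝ) (hgnn : ∀ s t, 0 ≤ g s t) (hgsym : ∀ s t, g s t = g t s)
    (w w₁ w₂ : ℝ) :
    triangleInt d α g w w₁ w₂ ≤
      (α * (volume (Metric.ball (0 : EuclideanSpace ℝ (Fin d)) 1)).toReal / (α - 1)) ^ 2
        * min (g w w₁) (g w w₂) * g w₁ w₂ :=
  stmt_9_general d hd α hα g hgnn w w₁ w₂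
end
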